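/- arXiv:2309.11437 — 5 statements merged into one kernel-verified Lean document; each statement's English description precedes it below -/
import Mathlib

section
/- Let K(x) = (1/2)∫_{|x|}^∞ e^{-t}/t dt. Then for all x ≠ 0, (1/4)e^{-|x|} log(1 + 2/|x|) ≤ K(x) ≤ (1/2)e^{-|x|} log(1 + 1/|x|). -/
/-!
Both bounds compare `E₁(r) = ∫_r^∞ e^{-t}/t dt` with `g(r) = ∫_r^∞ -g'(t) dt` for
`g(t) = e^{-t} log(1 + c/t)`, so it suffices to compare integrands. Since
`-g'(t) = e^{-t} (log(1 + c/t) + c/(t(t+c)))`, for `c = 1` the bound `log(1 + 1/t) ≥ 1/(t+1)`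
gives `-g' ≥ e^{-t}/t`, and for `c = 2` the bound `log y ≤ sinh (log y) = (y - y⁻¹)/2` at
`y = 1 + 2/t` gives `-g' ≤ 2e^{-t}/t`.
-/

open MeasureTheory Real Set Filter

noncomputable def K (x : ℝ) : ℝ := (1/2) * ∫ t in Set.Ioi |x|, Real.exp (-t) / t

open Topology

lemma Real.log_le_sub_inv_div_two {y : ℝ} (hy : 1 ≤ y) : log y ≤ (y - y⁻¹) / 2 := by
  rw [← sinh_log (by linarith)]
  exact self_le_sinh_iff.2 (log_nonneg hy)

section IoiComparison

variable {f g g' : ℝ → ℝ} {a : ℝ}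

theorem setIntegral_Ioi_le_of_le_neg_deriv (hf : IntegrableOn f (Ioi a))
    (hderiv : ∀ x ∈ Ici a, HasDerivAt g (g' x) x) (hg : Tendsto g atTop (𝓝 0))
    (hg' : ∀ x ∈ Ioi a, g' x ≤ 0) (hfg : ∀ x ∈ Ioi a, f x ≤ -g' x) :
    ∫ x in Ioi a, f x ≤ g a :=
  calc ∫ x in Ioi a, f x
      ≤ ∫ x in Ioi a, -g' x := setIntegral_mono_on hf
        (integrableOn_Ioi_deriv_of_nonpos' hderiv hg' hg).neg measurableSet_Ioi hfg
    _ = g a := by rw [integral_neg, integral_Ioi_of_hasDerivAt_of_nonpos' hderiv hg' hg]; ring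

theorem le_setIntegral_Ioi_of_neg_deriv_le (hf : IntegrableOn f (Ioi a))
    (hderiv : ∀ x ∈ Ici a, HasDerivAt g (g' x) x) (hg : Tendsto g atTop (𝓝 0))
    (hg' : ∀ x ∈ Ioi a, g' x ≤ 0) (hfg : ∀ x ∈ Ioi a, -g' x ≤ f x) :
    g a ≤ ∫ x in Ioi a, f x :=
  calc g a = ∫ x in Ioi a, -g' x := by
        rw [integral_neg, integral_Ioi_of_hasDerivAt_of_nonpos' hderiv hg' hg]; ring
    _ ≤ ∫ x in Ioi a, f x := setIntegral_mono_on
        (integrableOn_Ioi_deriv_of_nonpos' hderiv hg' hg).neg hf measurableSet_Ioi hfg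

end IoiComparison

lemma integrableOn_exp_neg_div_Ioi {a : ℝ} (ha : 0 < a) :
    IntegrableOn (fun t => exp (-t) / t) (Ioi a) := by
  have hexp : IntegrableOn (fun t => exp (-t)) (Ioi a) := by
    simpa using exp_neg_integrableOn_Ioi a one_pos
  refine (hexp.div_const a).mono' ?_ ?_
  · exact (ContinuousOn.div (by fun_prop) continuousOn_id fun t ht =>
      (ha.trans ht).ne').aestronglyMeasurable measurableSet_Ioi
  · filter_upwards [ae_restrict_mem measurableSet_Ioi] with t ht
    have ht0 : 0 < t := ha.trans ht
    rw [norm_of_nonneg (by positivity)]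
    exact div_le_div_of_nonneg_left (exp_pos _).le ha ht.le

lemma hasDerivAt_exp_neg_mul_log_one_add_div {c t : ℝ} (hc : 0 ≤ c) (ht : 0 < t) :
    HasDerivAt (fun s => exp (-s) * log (1 + c / s))
      (-(exp (-t) * (log (1 + c / t) + c / (t * (t + c))))) t := by
  have hpos : 0 < 1 + c / t := by positivity
  have hexp : HasDerivAt (fun s => exp (-s)) (-exp (-t)) t := by
    simpa using (hasDerivAt_neg t).exp
  have hlog : HasDerivAt (fun s => log (1 + c / s)) (-(c / t ^ 2) / (1 + c / t)) t := by
    have := ((hasDerivAt_inv ht.ne').const_mul c).const_add 1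
    simpa [div_eq_mul_inv] using this.log hpos.ne'
  refine (hexp.mul hlog).congr_deriv ?_
  have : t + c ≠ 0 := by positivity
  field_simp
  ring

lemma tendsto_exp_neg_mul_log_one_add_div (c : ℝ) :
    Tendsto (fun s => exp (-s) * log (1 + c / s)) atTop (𝓝 0) := by
  have hlog : Tendsto (fun s => log (1 + c / s)) atTop (𝓝 0) := by
    have h : Tendsto (fun s => 1 + c / s) atTop (𝓝 1) := by
      simpa using ((tendsto_const_nhds (x := c)).div_atTop tendsto_id).const_add 1
    simpa [Function.comp_def] using ((continuousAt_log one_ne_zero).tendsto).comp h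
  simpa using (tendsto_exp_neg_atTop_nhds_zero).mul hlog

theorem integral_exp_neg_div_Ioi_le {r : ℝ} (hr : 0 < r) :
    ∫ t in Ioi r, exp (-t) / t ≤ exp (-r) * log (1 + 1 / r) := by
  refine setIntegral_Ioi_le_of_le_neg_deriv (integrableOn_exp_neg_div_Ioi hr)
    (fun t ht => hasDerivAt_exp_neg_mul_log_one_add_div zero_le_one (hr.trans_le ht))
    (tendsto_exp_neg_mul_log_one_add_div 1) (fun t ht => ?_) (fun t ht => ?_)
  · have ht0 : 0 < t := hr.trans ht
    have : 0 ≤ log (1 + 1 / t) := log_nonneg (le_add_of_nonneg_right (by positivity))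
    simp only [neg_nonpos]
    positivity
  · have ht0 : 0 < t := hr.trans ht
    have hlog : 1 / (t + 1) ≤ log (1 + 1 / t) := by
      have h := one_sub_inv_le_log_of_pos (show 0 < 1 + 1 / t by positivity)
      have heq : 1 - (1 + 1 / t)⁻¹ = 1 / (t + 1) := by field_simp; ring
      linarith
    rw [neg_neg]
    calc exp (-t) / t = exp (-t) * (1 / (t + 1) + 1 / (t * (t + 1))) := by field_simp
      _ ≤ exp (-t) * (log (1 + 1 / t) + 1 / (t * (t + 1))) := by gcongr

theorem le_integral_exp_neg_div_Ioi {r : ℝ} (hr : 0 < r) :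
    exp (-r) * log (1 + 2 / r) / 2 ≤ ∫ t in Ioi r, exp (-t) / t := by
  refine le_setIntegral_Ioi_of_neg_deriv_le (g := fun s => exp (-s) * log (1 + 2 / s) / 2)
    (integrableOn_exp_neg_div_Ioi hr)
    (fun t ht => (hasDerivAt_exp_neg_mul_log_one_add_div zero_le_two (hr.trans_le ht)).div_const 2)
    (by simpa using (tendsto_exp_neg_mul_log_one_add_div 2).div_const 2) (fun t ht => ?_)
    (fun t ht => ?_)
  · have ht0 : 0 < t := hr.trans ht
    have : 0 ≤ log (1 + 2 / t) := log_nonneg (le_add_of_nonneg_right (by positivity))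
    rw [neg_div, neg_nonpos]
    positivity
  · have ht0 : 0 < t := hr.trans ht
    have hlog := Real.log_le_sub_inv_div_two (y := 1 + 2 / t)
      (le_add_of_nonneg_right (by positivity))
    have hsum : ((1 + 2 / t) - (1 + 2 / t)⁻¹) / 2 + 2 / (t * (t + 2)) = 2 / t := by
      field_simp; ring
    rw [neg_div, neg_neg]
    calc exp (-t) * (log (1 + 2 / t) + 2 / (t * (t + 2))) / 2
        ≤ exp (-t) * (2 / t) / 2 := by gcongr; linarith
      _ = exp (-t) / t := by ring

theorem K_bounds (x : ℝ) (hx : x ≠ 0) :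
    (1/4) * Real.exp (-|x|) * Real.log (1 + 2 / |x|) ≤ K x ∧
      K x ≤ (1/2) * Real.exp (-|x|) * Real.log (1 + 1 / |x|) := by
  have hr : 0 < |x| := abs_pos.2 hx
  have lower := le_integral_exp_neg_div_Ioi hr
  have upper := integral_exp_neg_div_Ioi_le hr
  rw [K]
  constructor <;> linarith
end

section
/- Let K(x) = (1/2)∫_{|x|}^∞ e^{-t}/t dt. Then the Fourier transform of K satisfies ∫_{-∞}^∞ e^{-iξx} K(x) dx = arctan(ξ)/ξ for every ξ ≠ 0. -/
/-! Write `K x = ½ ∫_{t > |x|} e^{-t}/t dt` and integrate over the cone `|x| < t` in the other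
order: the inner integral is `∫_{-t}^{t} e^{-iξx} dx = 2 sin(ξt)/ξ`, so the transform equals
`ξ⁻¹ ∫_0^∞ e^{-t} sin(ξt)/t dt`. This integral is `arctan ξ`: write `sin(ξt)/t = ∫_0^ξ cos(st) ds`,
swap the integrals once more and use `∫_0^∞ e^{-t} cos(st) dt = 1/(1+s²)`. -/

open MeasureTheory Real Set Filter

open Complex in
theorem integral_exp_neg_mul_cos_Ioi (s : ℝ) :
    ∫ t in Ioi (0 : ℝ), rexp (-t) * Real.cos (s * t) = 1 / (1 + s ^ 2) := by
  have ha : (-1 + s * I).re < 0 := by simp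
  have hre : ∀ t : ℝ, (cexp ((-1 + s * I) * t)).re = rexp (-t) * Real.cos (s * t) := by
    intro t
    simp [exp_re]
  have hre_int := integral_re (integrableOn_exp_mul_complex_Ioi ha 0)
  simp only [RCLike.re_to_complex, hre] at hre_int
  rw [hre_int, integral_exp_mul_complex_Ioi ha 0]
  simp [div_re, normSq_apply, sq]

theorem integral_exp_neg_mul_sin_div_Ioi (ξ : ℝ) :
    ∫ t in Ioi (0 : ℝ), rexp (-t) * sin (ξ * t) / t = arctan ξ := by
  have hint : Integrable (Function.uncurry fun (s t : ℝ) ↦ rexp (-t) * cos (s * t))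
      ((volume.restrict (uIoc 0 ξ)).prod (volume.restrict (Ioi 0))) := by
    have hbound : Integrable (fun p : ℝ × ℝ ↦ (1 : ℝ) * rexp (-p.2))
        ((volume.restrict (uIoc 0 ξ)).prod (volume.restrict (Ioi 0))) :=
      (integrableOn_const (C := (1 : ℝ)) measure_Ioc_lt_top.ne).mul_prod
        (by simpa [IntegrableOn] using exp_neg_integrableOn_Ioi 0 one_pos)
    refine hbound.mono' (by fun_prop) (.of_forall fun p ↦ ?_)
    simpa [Function.uncurry, abs_of_pos (exp_pos _)] using
      mul_le_mul_of_nonneg_left (abs_cos_le_one (p.1 * p.2)) (exp_pos (-p.2)).le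
  have hinner : ∀ t ∈ Ioi (0 : ℝ),
      ∫ s in (0 : ℝ)..ξ, rexp (-t) * cos (s * t) = rexp (-t) * sin (ξ * t) / t := by
    intro t ht
    rw [intervalIntegral.integral_const_mul,
      intervalIntegral.integral_comp_mul_right (fun u ↦ cos u) (ne_of_gt ht), integral_cos]
    simp only [zero_mul, sin_zero, sub_zero, smul_eq_mul]
    field_simp
  calc ∫ t in Ioi (0 : ℝ), rexp (-t) * sin (ξ * t) / t
      = ∫ t in Ioi (0 : ℝ), ∫ s in (0 : ℝ)..ξ, rexp (-t) * cos (s * t) :=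
        (setIntegral_congr_fun measurableSet_Ioi hinner).symm
    _ = ∫ s in (0 : ℝ)..ξ, ∫ t in Ioi (0 : ℝ), rexp (-t) * cos (s * t) :=
        (intervalIntegral_integral_swap hint).symm
    _ = arctan ξ := by
        simp_rw [integral_exp_neg_mul_cos_Ioi, integral_one_div_one_add_sq, arctan_zero, sub_zero]

open Complex in
theorem integral_Ioo_cexp_neg_I_mul {ξ t : ℝ} (hξ : ξ ≠ 0) (ht : 0 ≤ t) :
    ∫ x in Ioo (-t) t, cexp (-(I * ξ * x)) = ((2 * Real.sin (ξ * t) / ξ : ℝ) : ℂ) := by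
  have hc : -(I * ξ) ≠ 0 := by simp [hξ]
  rw [← integral_Ioc_eq_integral_Ioo, ← intervalIntegral.integral_of_le (by linarith)]
  simp_rw [← neg_mul (I * ξ)]
  rw [integral_exp_mul_complex hc]
  have hsin : cexp (-(I * ξ) * t) - cexp (-(I * ξ) * ↑(-t)) = -2 * I * Real.sin (ξ * t) := by
    rw [ofReal_sin, Complex.sin, ofReal_neg, ofReal_mul]
    ring_nf
    rw [I_sq]
    ring
  rw [hsin]
  field_simp
  push_cast
  ring

theorem integral_integral_Ioi_abs_swap {E : Type*} [NormedAddCommGroup E] [NormedSpace ℝ E]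
    {f : ℝ → ℝ → E} (hf : IntegrableOn (Function.uncurry f) {p | |p.1| < p.2}) :
    ∫ x, ∫ t in Ioi |x|, f x t = ∫ t in Ioi 0, ∫ x in Ioo (-t) t, f x t := by
  set S : Set (ℝ × ℝ) := {p | |p.1| < p.2}
  have hS : MeasurableSet S := measurableSet_lt (by fun_prop) (by fun_prop)
  rw [← integrable_indicator_iff hS, Measure.volume_eq_prod] at hf
  have hsec_t : ∀ x t, S.indicator (Function.uncurry f) (x, t) = (Ioi |x|).indicator (f x) t :=
    fun x t ↦ rfl
  have hsec_x : ∀ x t,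
      S.indicator (Function.uncurry f) (x, t) = (Ioo (-t) t).indicator (f · t) x := by
    intro x t
    simp [S, indicator_apply, abs_lt]
  calc ∫ x, ∫ t in Ioi |x|, f x t
      = ∫ x, ∫ t, S.indicator (Function.uncurry f) (x, t) := by
        simp only [hsec_t, integral_indicator measurableSet_Ioi]
    _ = ∫ t, ∫ x, S.indicator (Function.uncurry f) (x, t) := integral_integral_swap hf
    _ = ∫ t, ∫ x in Ioo (-t) t, f x t := by
        simp only [hsec_x, integral_indicator measurableSet_Ioo]
    _ = ∫ t in Ioi 0, ∫ x in Ioo (-t) t, f x t := by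
        refine (setIntegral_eq_integral_of_forall_compl_eq_zero fun t ht ↦ ?_).symm
        rw [Ioo_eq_empty (by simpa using ht), Measure.restrict_empty, integral_zero_measure]

theorem integrableOn_exp_neg_div_snd_cone :
    IntegrableOn (fun p : ℝ × ℝ ↦ rexp (-p.2) / p.2) {p | |p.1| < p.2} := by
  set S : Set (ℝ × ℝ) := {p | |p.1| < p.2}
  have hS : MeasurableSet S := measurableSet_lt (by fun_prop) (by fun_prop)
  rw [← integrable_indicator_iff hS, Measure.volume_eq_prod,
    integrable_prod_iff' ((by fun_prop : Measurable _).indicator hS).aestronglyMeasurable]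
  have hsec_x : ∀ x t, S.indicator (fun p : ℝ × ℝ ↦ rexp (-p.2) / p.2) (x, t) =
      (Ioo (-t) t).indicator (fun _ ↦ rexp (-t) / t) x := by
    intro x t
    simp [S, indicator_apply, abs_lt]
  -- The section at height `t` has length `2t`, which cancels the singularity of `1/t`.
  have hnorm : ∀ t, ∫ x, ‖(Ioo (-t) t).indicator (fun _ ↦ rexp (-t) / t) x‖ =
      (Ioi 0).indicator (fun t ↦ 2 * rexp (-t)) t := by
    intro t
    simp_rw [norm_indicator_eq_indicator_norm]
    rw [integral_indicator measurableSet_Ioo, setIntegral_const, volume_real_Ioo]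
    rcases le_or_gt t 0 with ht | ht
    · simp [ht]
    · rw [indicator_of_mem (mem_Ioi.2 ht), max_eq_left (by linarith),
        Real.norm_of_nonneg (by positivity), smul_eq_mul]
      field_simp
      ring
  simp only [hsec_x, hnorm]
  refine ⟨.of_forall fun t ↦ (integrable_indicator_iff measurableSet_Ioo).2
    (integrableOn_const measure_Ioo_lt_top.ne), ?_⟩
  rw [integrable_indicator_iff measurableSet_Ioi]
  exact (by simpa using exp_neg_integrableOn_Ioi 0 one_pos : IntegrableOn _ _ _).const_mul 2

theorem fourier_K (ξ : ℝ) (hξ : ξ ≠ 0) :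
    (∫ x : ℝ, Complex.exp (-(Complex.I * ξ * x)) * (K x : ℂ)) =
      ((Real.arctan ξ / ξ : ℝ) : ℂ) := by
  set g : ℝ → ℝ → ℂ := fun x t ↦ Complex.exp (-(Complex.I * ξ * x)) * ((rexp (-t) / t : ℝ) : ℂ)
  have hg : IntegrableOn (Function.uncurry g) {p | |p.1| < p.2} := by
    refine (integrableOn_exp_neg_div_snd_cone.ofReal (𝕜 := ℂ)).mono (by fun_prop)
      (.of_forall fun p ↦ ?_)
    simp [g, Function.uncurry, Complex.norm_exp]
  have hK : ∀ x : ℝ, Complex.exp (-(Complex.I * ξ * x)) * (K x : ℂ) =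
      1 / 2 * ∫ t in Ioi |x|, g x t := by
    intro x
    rw [integral_const_mul, integral_complex_ofReal, K]
    push_cast
    ring
  have hinner : ∀ t ∈ Ioi (0 : ℝ), ∫ x in Ioo (-t) t, g x t =
      ((2 / ξ * (rexp (-t) * sin (ξ * t) / t) : ℝ) : ℂ) := by
    intro t ht
    rw [integral_mul_const, integral_Ioo_cexp_neg_I_mul hξ ht.le, ← Complex.ofReal_mul]
    congr 1
    ring
  calc ∫ x : ℝ, Complex.exp (-(Complex.I * ξ * x)) * (K x : ℂ)
      = 1 / 2 * ∫ t in Ioi 0, ∫ x in Ioo (-t) t, g x t := by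
        simp_rw [hK, integral_const_mul, integral_integral_Ioi_abs_swap hg]
    _ = ((Real.arctan ξ / ξ : ℝ) : ℂ) := by
        rw [setIntegral_congr_fun measurableSet_Ioi hinner, integral_complex_ofReal,
          integral_const_mul, integral_exp_neg_mul_sin_div_Ioi]
        push_cast
        ring
end

section
/- Let f(x) = (e^{-x}/4)(1+x) - (x/2)K(x)(2+x), where K(x) = (1/2)∫_x^∞ e^{-t}/t dt for x > 0. Then f is monotonically decreasing on (0,∞), f(0) = 1/4, and lim_{x→∞} f(x) = 0; in particular f(x) ≥ 0 for all x ≥ 0. -/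
open MeasureTheory Real Set Filter

noncomputable def f (x : ℝ) : ℝ :=
  Real.exp (-x) / 4 * (1 + x) - x / 2 * K x * (2 + x)

/-!
`K` is half the exponential integral `E₁`, and `K' = -e⁻ˣ / (2x)` gives
`f'(x) = e⁻ˣ / 2 - (1 + x) K(x)`. Integrating `e⁻ᵗ (t + 2) / (t + 1)² ≤ e⁻ᵗ / t` over `(x, ∞)`,
the left side being the derivative of `-e⁻ᵗ / (t + 1)`, gives `K(x) ≥ e⁻ˣ / (2 (x + 1))`, which is
exactly `f' ≤ 0`.
The upper bound `K(x) ≤ e⁻ˣ / (2x)` gives `|f(x)| ≤ (1 + x) e⁻ˣ / 4 → 0`, and a decreasing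
function with limit `0` is nonnegative.
-/

theorem hasDerivAt_integral_Ioi {g : ℝ → ℝ} {a x : ℝ} (hax : a < x)
    (hg : IntegrableOn g (Ioi a)) (hcont : ContinuousAt g x) :
    HasDerivAt (fun y => ∫ t in Ioi y, g t) (-g x) x := by
  have hmeas : StronglyMeasurableAtFilter g (nhds x) :=
    AEStronglyMeasurable.stronglyMeasurableAtFilter_of_mem hg.aestronglyMeasurable
      (Ioi_mem_nhds hax)
  have hint : HasDerivAt (fun y => (∫ t in Ioi x, g t) - ∫ t in x..y, g t) (-g x) x := by
    simpa using
      (intervalIntegral.integral_hasDerivAt_right .refl hmeas hcont).const_sub (∫ t in Ioi x, g t)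
  refine hint.congr_of_eventuallyEq ?_
  filter_upwards [Ioi_mem_nhds hax] with y hy
  rw [← intervalIntegral.integral_Ioi_sub_Ioi' (hg.mono_set (Ioi_subset_Ioi hax.le))
    (hg.mono_set (Ioi_subset_Ioi hy.le)), sub_sub_cancel]

section ExpIntegral

variable {x : ℝ}

theorem integrableOn_exp_neg_div_self_Ioi (hx : 0 < x) :
    IntegrableOn (fun t => exp (-t) / t) (Ioi x) := by
  refine ((integrableOn_exp_neg_Ioi x).div_const x).mono'
    (by fun_prop : Measurable fun t => exp (-t) / t).aestronglyMeasurable ?_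
  filter_upwards [ae_restrict_mem measurableSet_Ioi] with t (ht : x < t)
  rw [norm_of_nonneg (by have := hx.trans ht; positivity)]
  exact div_le_div_of_nonneg_left (exp_pos _).le hx ht.le

theorem setIntegral_exp_neg_div_self_le (hx : 0 < x) :
    ∫ t in Ioi x, exp (-t) / t ≤ exp (-x) / x :=
  calc ∫ t in Ioi x, exp (-t) / t
      ≤ ∫ t in Ioi x, exp (-t) / x :=
        setIntegral_mono_on (integrableOn_exp_neg_div_self_Ioi hx)
          ((integrableOn_exp_neg_Ioi x).div_const x) measurableSet_Ioi
          fun t (ht : x < t) => div_le_div_of_nonneg_left (exp_pos _).le hx ht.le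
    _ = exp (-x) / x := by rw [integral_div, integral_exp_neg_Ioi]

theorem hasDerivAt_neg_exp_neg_div_add_one {t : ℝ} (ht : t ≠ -1) :
    HasDerivAt (fun t => -exp (-t) / (t + 1)) (exp (-t) * (t + 2) / (t + 1) ^ 2) t := by
  have hnum : HasDerivAt (fun t => -exp (-t)) (exp (-t)) t := by
    simpa [Pi.neg_def] using ((hasDerivAt_neg t).exp).neg
  have hden : HasDerivAt (fun t => t + 1) 1 t := (hasDerivAt_id' t).add_const 1
  refine (hnum.div hden (by contrapose! ht; linarith)).congr_deriv ?_
  ring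

theorem exp_neg_div_add_one_le_setIntegral (hx : 0 < x) :
    exp (-x) / (x + 1) ≤ ∫ t in Ioi x, exp (-t) / t := by
  have hderiv : ∀ t ∈ Ici x,
      HasDerivAt (fun t => -exp (-t) / (t + 1)) (exp (-t) * (t + 2) / (t + 1) ^ 2) t :=
    fun t (ht : x ≤ t) => hasDerivAt_neg_exp_neg_div_add_one (by linarith)
  have hnonneg : ∀ t ∈ Ioi x, 0 ≤ exp (-t) * (t + 2) / (t + 1) ^ 2 :=
    fun t (ht : x < t) => by have := hx.trans ht; positivity
  have hlim : Tendsto (fun t => -exp (-t) / (t + 1)) atTop (nhds 0) := by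
    simpa using tendsto_exp_neg_atTop_nhds_zero.neg.div_atTop (tendsto_atTop_add_const_right _ 1
      tendsto_id)
  calc exp (-x) / (x + 1)
      = ∫ t in Ioi x, exp (-t) * (t + 2) / (t + 1) ^ 2 := by
        rw [integral_Ioi_of_hasDerivAt_of_nonneg' hderiv hnonneg hlim]
        ring
    _ ≤ ∫ t in Ioi x, exp (-t) / t := by
        refine setIntegral_mono_on (integrableOn_Ioi_deriv_of_nonneg' hderiv hnonneg hlim)
          (integrableOn_exp_neg_div_self_Ioi hx) measurableSet_Ioi fun t (ht : x < t) => ?_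
        have ht0 : 0 < t := hx.trans ht
        rw [div_le_div_iff₀ (by positivity) ht0]
        -- `t (t + 2) ≤ (t + 1)²`
        nlinarith [exp_pos (-t)]

end ExpIntegral

section K

variable {x : ℝ}

theorem K_of_pos (hx : 0 < x) : K x = (1/2) * ∫ t in Ioi x, exp (-t) / t := by
  rw [K, abs_of_pos hx]

theorem K_hasDerivAt (hx : 0 < x) : HasDerivAt K (-(exp (-x) / x) / 2) x := by
  have hcont : ContinuousAt (fun t => exp (-t) / t) x :=
    (continuous_exp.comp continuous_neg).continuousAt.div continuousAt_id hx.ne'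
  have hderiv := ((hasDerivAt_integral_Ioi (half_lt_self hx)
    (integrableOn_exp_neg_div_self_Ioi (half_pos hx)) hcont).const_mul (1/2 : ℝ))
  refine (hderiv.congr_deriv (by ring)).congr_of_eventuallyEq ?_
  filter_upwards [Ioi_mem_nhds hx] with y hy
  exact K_of_pos hy

theorem exp_neg_div_le_K (hx : 0 < x) : exp (-x) / (2 * (x + 1)) ≤ K x := by
  rw [K_of_pos hx, mul_comm 2, ← div_div]
  linarith [exp_neg_div_add_one_le_setIntegral hx]

theorem K_le_exp_neg_div (hx : 0 < x) : K x ≤ exp (-x) / (2 * x) := by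
  rw [K_of_pos hx, mul_comm 2, ← div_div]
  linarith [setIntegral_exp_neg_div_self_le hx]

theorem K_nonneg (hx : 0 < x) : 0 ≤ K x :=
  (by positivity : 0 ≤ exp (-x) / (2 * (x + 1))).trans (exp_neg_div_le_K hx)

end K

section f

variable {x : ℝ}

theorem f_hasDerivAt (hx : 0 < x) : HasDerivAt f (exp (-x) / 2 - (1 + x) * K x) x := by
  have hexp : HasDerivAt (fun x => exp (-x)) (-exp (-x)) x := by
    simpa using (hasDerivAt_neg x).exp
  have hhalf : HasDerivAt (fun x : ℝ => x / 2) (1/2) x := by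
    simpa using (hasDerivAt_id x).div_const 2
  refine (((hexp.div_const 4).mul ((hasDerivAt_id x).const_add 1)).sub
    ((hhalf.mul (K_hasDerivAt hx)).mul ((hasDerivAt_id x).const_add 2))).congr_deriv ?_
  simp only [id_eq, Pi.mul_apply]
  field_simp
  ring

theorem f_antitoneOn : AntitoneOn f (Ioi 0) := by
  refine antitoneOn_of_deriv_nonpos (convex_Ioi 0)
    (fun x hx => (f_hasDerivAt hx).continuousAt.continuousWithinAt) ?_ ?_ <;> rw [interior_Ioi]
  · exact fun x hx => (f_hasDerivAt hx).differentiableAt.differentiableWithinAt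
  · intro x (hx : 0 < x)
    have hK := exp_neg_div_le_K hx
    rw [div_le_iff₀ (by positivity)] at hK
    rw [(f_hasDerivAt hx).deriv]
    nlinarith

theorem abs_f_le (hx : 0 < x) : |f x| ≤ (1 + x) * exp (-x) / 4 := by
  have hK := K_le_exp_neg_div hx
  have hKx : x * K x ≤ exp (-x) / 2 := by
    rw [le_div_iff₀ (by positivity)] at hK
    linarith
  have hK0 := K_nonneg hx
  have hexp := exp_pos (-x)
  rw [abs_le, f]
  constructor
  · nlinarith [mul_le_mul_of_nonneg_right hKx (by linarith : (0:ℝ) ≤ 2 + x)]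
  · nlinarith [mul_nonneg (mul_nonneg hx.le hK0) (by linarith : (0:ℝ) ≤ 2 + x)]

theorem tendsto_f_atTop : Tendsto f atTop (nhds 0) := by
  have hbound : Tendsto (fun x => (1 + x) * exp (-x) / 4) atTop (nhds 0) := by
    have := (tendsto_exp_neg_atTop_nhds_zero.add
      (by simpa using tendsto_pow_mul_exp_neg_atTop_nhds_zero 1)).div_const 4
    simpa [add_mul] using this
  refine squeeze_zero_norm' ?_ hbound
  filter_upwards [eventually_gt_atTop 0] with x hx
  exact abs_f_le hx

end f

theorem f_properties :
    AntitoneOn f (Set.Ioi 0) ∧ f 0 = 1/4 ∧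
      Filter.Tendsto f Filter.atTop (nhds 0) ∧ ∀ x ≥ (0:ℝ), 0 ≤ f x := by
  have hf0 : f 0 = 1/4 := by norm_num [f]
  refine ⟨f_antitoneOn, hf0, tendsto_f_atTop, fun x hx => ?_⟩
  rcases hx.eq_or_lt with rfl | hx
  · norm_num [hf0]
  · refine le_of_tendsto tendsto_f_atTop ?_
    filter_upwards [eventually_ge_atTop x] with y hy
    exact f_antitoneOn hx (hx.trans_le hy) hy
end

section
/- Let Ω ⊂ ℝ³ be open and bounded, ε > 0, and K_ε(z) = e^{-|z|/ε}/(4πε|z|²). Suppose v ∈ C(closure of Ω) is bounded and satisfies v(x) - ∫_Ω K_ε(η - x) v(η) dη ≥ 0 for all x ∈ Ω. Then v ≥ 0 on Ω. -/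
/-!
If `v` had a negative minimum `m` over the compact set `closure Ω`, attained at `z`, then at
every `y ∈ Ω` we would get `v y ≥ ∫_Ω K v ≥ m ∫_Ω K ≥ m c`, where `c < 1` bounds the mass of
the kernel on `Ω`. By continuity `v z ≥ m c > m`, a contradiction. For the kernel
`K_ε(z) = e^{-|z|/ε}/(4πε|z|²)`, polar coordinates give mass exactly `1 - e^{-b/ε}` on a ball of
radius `b`, so `c = 1 - e^{-diam Ω/ε}` works.
-/

open MeasureTheory Real Metric Set

section NonlocalMaximumPrinciple

variable {X : Type*} [MeasurableSpace X] {μ : Measure X} {Ω : Set X}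

lemma mul_le_setIntegral_mul {k v : X → ℝ} {m c : ℝ} (hΩ : MeasurableSet Ω)
    (hk_nonneg : ∀ η ∈ Ω, 0 ≤ k η) (hk_int : IntegrableOn k Ω μ) (hk_le : ∫ η in Ω, k η ∂μ ≤ c)
    (hc : 0 ≤ c) (hm : m ≤ 0) (hmv : ∀ η ∈ Ω, m ≤ v η) :
    m * c ≤ ∫ η in Ω, k η * v η ∂μ := by
  by_cases hkv : IntegrableOn (fun η => k η * v η) Ω μ
  · calc m * c ≤ m * ∫ η in Ω, k η ∂μ := mul_le_mul_of_nonpos_left hk_le hm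
      _ = ∫ η in Ω, k η * m ∂μ := by rw [integral_mul_const, mul_comm]
      _ ≤ ∫ η in Ω, k η * v η ∂μ := setIntegral_mono_on (hk_int.mul_const m) hkv hΩ
          fun η hη => mul_le_mul_of_nonneg_left (hmv η hη) (hk_nonneg η hη)
  · rw [integral_undef hkv]
    exact mul_nonpos_of_nonpos_of_nonneg hm hc

variable [TopologicalSpace X]

theorem nonneg_of_sub_setIntegral_mul_nonneg {k : X → X → ℝ} {v : X → ℝ} {c : ℝ}
    (hΩ : MeasurableSet Ω) (hΩc : IsCompact (closure Ω)) (hv : ContinuousOn v (closure Ω))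
    (hk_nonneg : ∀ y ∈ Ω, ∀ η ∈ Ω, 0 ≤ k y η) (hk_int : ∀ y ∈ Ω, IntegrableOn (k y) Ω μ)
    (hk_le : ∀ y ∈ Ω, ∫ η in Ω, k y η ∂μ ≤ c) (hc₀ : 0 ≤ c) (hc₁ : c < 1)
    (hsuper : ∀ y ∈ Ω, 0 ≤ v y - ∫ η in Ω, k y η * v η ∂μ) :
    ∀ x ∈ Ω, 0 ≤ v x := by
  intro x hx
  by_contra! hvx
  obtain ⟨z, hz, hmin⟩ := hΩc.exists_isMinOn ⟨x, subset_closure hx⟩ hv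
  have hm : v z < 0 := (hmin (subset_closure hx)).trans_lt hvx
  have hlower : ∀ y ∈ Ω, v z * c ≤ v y := fun y hy =>
    (mul_le_setIntegral_mul hΩ (hk_nonneg y hy) (hk_int y hy) (hk_le y hy) hc₀ hm.le
      fun η hη => hmin (subset_closure hη)).trans (sub_nonneg.1 (hsuper y hy))
  have hz_lower : v z * c ≤ v z :=
    ContinuousWithinAt.closure_le hz continuousWithinAt_const
      ((hv z hz).mono subset_closure) hlower
  nlinarith

end NonlocalMaximumPrinciple

/-- Radial profile of the kernel: `K_ε z = expKernel ε ‖z‖`. -/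
noncomputable def expKernel (ε r : ℝ) : ℝ := exp (-r / ε) / (4 * π * ε * r ^ 2)

lemma expKernel_nonneg {ε : ℝ} (hε : 0 ≤ ε) (r : ℝ) : 0 ≤ expKernel ε r := by
  unfold expKernel; positivity

lemma intervalIntegral_exp_neg_div {ε : ℝ} (hε : ε ≠ 0) (b : ℝ) :
    ∫ y in (0)..b, exp (-y / ε) = ε * (1 - exp (-b / ε)) := by
  have hscale := intervalIntegral.integral_comp_div (fun t => exp (-t)) hε (a := 0) (b := b)
  simp only [neg_div] at hscale ⊢
  rw [hscale, intervalIntegral.integral_comp_neg, integral_exp, smul_eq_mul]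
  simp

lemma integral_Ioi_sq_smul_indicator_expKernel {ε : ℝ} (hε : 0 < ε) {b : ℝ} (hb : 0 ≤ b) :
    ∫ y in Ioi 0, y ^ 2 • (Iic b).indicator (expKernel ε) y
      = (1 - exp (-b / ε)) / (4 * π) := by
  have hradial : EqOn (fun y => y ^ 2 • (Iic b).indicator (expKernel ε) y)
      ((Iic b).indicator fun y => exp (-y / ε) / (4 * π * ε)) (Ioi 0) := by
    intro y (hy : 0 < y)
    by_cases hyb : y ∈ Iic b
    · simp only [indicator_of_mem hyb, expKernel, smul_eq_mul]
      field_simp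
    · simp [indicator_of_notMem hyb]
  rw [setIntegral_congr_fun measurableSet_Ioi hradial, setIntegral_indicator measurableSet_Iic,
    Ioi_inter_Iic, ← intervalIntegral.integral_of_le hb, intervalIntegral.integral_div,
    intervalIntegral_exp_neg_div hε.ne']
  field_simp

lemma setIntegral_closedBall_expKernel {ε : ℝ} (hε : 0 < ε) {b : ℝ} (hb : 0 ≤ b) :
    ∫ z in closedBall (0 : EuclideanSpace ℝ (Fin 3)) b, expKernel ε ‖z‖ = 1 - exp (-b / ε) := by
  have hradial : (closedBall (0 : EuclideanSpace ℝ (Fin 3)) b).indicator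
      (fun z => expKernel ε ‖z‖) = fun z => (Iic b).indicator (expKernel ε) ‖z‖ := by
    ext z
    simp [indicator]
  rw [← integral_indicator measurableSet_closedBall, hradial, integral_fun_norm_addHaar,
    finrank_euclideanSpace_fin, measureReal_def, EuclideanSpace.volume_ball_fin_three,
    ENNReal.ofReal_one, integral_Ioi_sq_smul_indicator_expKernel hε hb, one_pow, one_mul, ENNReal.toReal_ofReal (by positivity), smul_eq_mul, nsmul_eq_mul]
  field_simp
  norm_num

lemma setIntegral_closedBall_expKernel_sub {ε : ℝ} (hε : 0 < ε) (x : EuclideanSpace ℝ (Fin 3))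
    {b : ℝ} (hb : 0 ≤ b) :
    ∫ η in closedBall x b, expKernel ε ‖η - x‖ = 1 - exp (-b / ε) := by
  have hpre : (· - x) ⁻¹' closedBall 0 b = closedBall x b := by
    ext η
    simp [dist_eq_norm]
  rw [← hpre, (measurePreserving_sub_right volume x).setIntegral_preimage_emb
    (measurableEmbedding_subRight x) (fun z => expKernel ε ‖z‖),
    setIntegral_closedBall_expKernel hε hb]

lemma integrableOn_closedBall_expKernel_sub {ε : ℝ} (hε : 0 < ε) (x : EuclideanSpace ℝ (Fin 3))
    (b : ℝ) : IntegrableOn (fun η => expKernel ε ‖η - x‖) (closedBall x b) := by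
  -- integrability is read off from the nonzero mass of a larger ball
  have hmass : ∫ η in closedBall x (max b 1), expKernel ε ‖η - x‖ ≠ 0 := by
    have hpos : 0 < max b 1 / ε := by positivity
    rw [setIntegral_closedBall_expKernel_sub hε x (by positivity), sub_ne_zero, neg_div]
    exact (Real.exp_lt_one_iff.2 (neg_neg_of_pos hpos)).ne'
  exact IntegrableOn.mono_set (Integrable.of_integral_ne_zero hmass)
    (closedBall_subset_closedBall (le_max_left _ _))

lemma integrableOn_expKernel_sub {ε : ℝ} (hε : 0 < ε) {Ω : Set (EuclideanSpace ℝ (Fin 3))}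
    (hΩ : Bornology.IsBounded Ω) {y : EuclideanSpace ℝ (Fin 3)} (hy : y ∈ Ω) :
    IntegrableOn (fun η => expKernel ε ‖η - y‖) Ω :=
  (integrableOn_closedBall_expKernel_sub hε y (diam Ω)).mono_set
    fun _ hη => mem_closedBall.2 (dist_le_diam_of_mem hΩ hη hy)

lemma setIntegral_expKernel_sub_le {ε : ℝ} (hε : 0 < ε) {Ω : Set (EuclideanSpace ℝ (Fin 3))}
    (hΩ : Bornology.IsBounded Ω) {y : EuclideanSpace ℝ (Fin 3)} (hy : y ∈ Ω) :
    ∫ η in Ω, expKernel ε ‖η - y‖ ≤ 1 - exp (-diam Ω / ε) := by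
  rw [← setIntegral_closedBall_expKernel_sub hε y diam_nonneg]
  exact setIntegral_mono_set (integrableOn_closedBall_expKernel_sub hε y _)
    (.of_forall fun _ => expKernel_nonneg hε.le _)
    (LE.le.eventuallyLE fun _ hη => mem_closedBall.2 (dist_le_diam_of_mem hΩ hη hy))

theorem max_principle_Omega_general (Ω : Set (EuclideanSpace ℝ (Fin 3))) (hΩo : IsOpen Ω)
    (hΩb : Bornology.IsBounded Ω) (ε : ℝ) (hε : 0 < ε)
    (v : EuclideanSpace ℝ (Fin 3) → ℝ)
    (hcont : ContinuousOn v (closure Ω))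
    (hsuper : ∀ x ∈ Ω, 0 ≤ v x -
      ∫ η in Ω, Real.exp (-‖η - x‖ / ε) / (4 * π * ε * ‖η - x‖^2) * v η) :
    ∀ x ∈ Ω, 0 ≤ v x :=
  nonneg_of_sub_setIntegral_mul_nonneg (k := fun y η => expKernel ε ‖η - y‖)
    hΩo.measurableSet hΩb.isCompact_closure hcont
    (fun _ _ _ _ => expKernel_nonneg hε.le _) (fun _ => integrableOn_expKernel_sub hε hΩb)
    (fun _ => setIntegral_expKernel_sub_le hε hΩb) (sub_nonneg.2 (exp_le_one_iff.2
      (div_nonpos_of_nonpos_of_nonneg (neg_nonpos.2 diam_nonneg) hε.le)))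
    (sub_lt_self _ (exp_pos _)) hsuper

theorem max_principle_Omega (Ω : Set (EuclideanSpace ℝ (Fin 3))) (hΩo : IsOpen Ω)
    (hΩb : Bornology.IsBounded Ω) (ε : ℝ) (hε : 0 < ε)
    (v : EuclideanSpace ℝ (Fin 3) → ℝ)
    (hcont : ContinuousOn v (closure Ω))
    (hbdd : ∃ C : ℝ, ∀ x, |v x| ≤ C)
    (hsuper : ∀ x ∈ Ω, 0 ≤ v x -
      ∫ η in Ω, Real.exp (-‖η - x‖ / ε) / (4 * π * ε * ‖η - x‖^2) * v η) :
    ∀ x ∈ Ω, 0 ≤ v x :=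
  max_principle_Omega_general Ω hΩo hΩb ε hε v hcont hsuper
end

section
/- Let α : ℝ³ → ℝ be continuous with 0 < c₀ ≤ α(x) ≤ c₁ for all x. For ε > 0 define K_ε(x;η) = α(η)·exp(-(1/ε)∫_0^{|x-η|} α(x - t·(x-η)/|x-η|) dt)/(4πε|x-η|²). Then for every x ∈ ℝ³, ∫_{ℝ³} K_ε(x;η) dη = 1. -/
/-!
Translate η to the displacement y = x - η and pass to polar coordinates y = r • n. The factor
r² of the volume element cancels the ‖y‖² of the kernel, and along each ray the integrand
α(x - r n) exp(-(1/ε) ∫₀ʳ α(x - t n) dt) is the derivative of -ε exp(-(1/ε) ∫₀ʳ α(x - t n) dt),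
which tends to 0 as r → ∞ because α ≥ c₀ > 0. Hence every direction contributes ε / (4πε), and
the unit sphere has area 4π.
-/

open MeasureTheory Real Filter Set Metric intervalIntegral
open scoped Topology ENNReal

section Radial

variable {f : ℝ → ℝ} {c ε : ℝ}

theorem tendsto_integral_atTop_of_le (hf : Continuous f) (hc : 0 < c) (hfc : ∀ t, c ≤ f t) :
    Tendsto (fun r => ∫ t in (0:ℝ)..r, f t) atTop atTop := by
  refine tendsto_atTop_mono' atTop ?_ (tendsto_id.atTop_mul_const hc)
  filter_upwards [eventually_ge_atTop 0] with r hr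
  simpa using integral_mono_on hr intervalIntegrable_const
    (hf.intervalIntegrable (μ := volume) 0 r) fun t _ => hfc t

theorem hasDerivAt_neg_mul_exp_neg_integral (hf : Continuous f) (hε : ε ≠ 0) (r : ℝ) :
    HasDerivAt (fun r => -(ε * exp (-(1/ε) * ∫ t in (0:ℝ)..r, f t)))
      (f r * exp (-(1/ε) * ∫ t in (0:ℝ)..r, f t)) r := by
  have hF : HasDerivAt (fun r => ∫ t in (0:ℝ)..r, f t) (f r) r :=
    integral_hasDerivAt_right (hf.intervalIntegrable _ _) (hf.stronglyMeasurableAtFilter _ _)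
      hf.continuousAt
  refine (((hF.const_mul (-(1/ε))).exp).const_mul ε).neg.congr_deriv ?_
  field_simp

theorem tendsto_neg_mul_exp_neg_integral (hf : Continuous f) (hc : 0 < c)
    (hfc : ∀ t, c ≤ f t) (hε : 0 < ε) :
    Tendsto (fun r => -(ε * exp (-(1/ε) * ∫ t in (0:ℝ)..r, f t))) atTop (𝓝 0) := by
  have hexp := tendsto_exp_atBot.comp <|
    (tendsto_integral_atTop_of_le hf hc hfc).const_mul_atTop_of_neg (r := -(1/ε))
      (by simpa using hε)
  simpa using (hexp.const_mul ε).neg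

theorem integral_Ioi_mul_exp_neg_integral (hf : Continuous f) (hc : 0 < c)
    (hfc : ∀ t, c ≤ f t) (hε : 0 < ε) :
    IntegrableOn (fun r => f r * exp (-(1/ε) * ∫ t in (0:ℝ)..r, f t)) (Ioi 0) ∧
      ∫ r in Ioi 0, f r * exp (-(1/ε) * ∫ t in (0:ℝ)..r, f t) = ε := by
  have hderiv : ∀ r ∈ Ici (0:ℝ), _ := fun r _ =>
    hasDerivAt_neg_mul_exp_neg_integral hf hε.ne' r
  have hnonneg : ∀ r ∈ Ioi (0:ℝ), 0 ≤ f r * exp (-(1/ε) * ∫ t in (0:ℝ)..r, f t) :=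
    fun r _ => mul_nonneg (hc.le.trans (hfc r)) (exp_pos _).le
  have hlim := tendsto_neg_mul_exp_neg_integral hf hc hfc hε
  refine ⟨integrableOn_Ioi_deriv_of_nonneg' hderiv hnonneg hlim, ?_⟩
  rw [integral_Ioi_of_hasDerivAt_of_nonneg' hderiv hnonneg hlim]
  simp

end Radial

theorem MeasureTheory.Measure.lintegral_eq_lintegral_sphere_lintegral_Ioi
    {E : Type*} [NormedAddCommGroup E] [NormedSpace ℝ E] [FiniteDimensional ℝ E] [Nontrivial E]
    [MeasurableSpace E] [BorelSpace E] (μ : Measure E) [μ.IsAddHaarMeasure]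
    {f : E → ℝ≥0∞} (hf : Measurable f) :
    ∫⁻ x, f x ∂μ = ∫⁻ n : sphere (0:E) 1, (∫⁻ r in Ioi (0:ℝ),
      ENNReal.ofReal (r ^ (Module.finrank ℝ E - 1)) * f (r • (n : E))) ∂μ.toSphere := by
  have hpolar := (μ.measurePreserving_homeomorphUnitSphereProd.symm
    (homeomorphUnitSphereProd E).toMeasurableEquiv).lintegral_comp_emb
    (MeasurableEquiv.measurableEmbedding _) (fun z => f z.1)
  calc ∫⁻ x, f x ∂μ = ∫⁻ x in {0}ᶜ, f x ∂μ := by rw [restrict_compl_singleton]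
    _ = ∫⁻ z : ({0}ᶜ : Set E), f z ∂(μ.comap Subtype.val) :=
      (lintegral_subtype_comap (measurableSet_singleton 0).compl _).symm
    _ = ∫⁻ p : sphere (0:E) 1 × Ioi (0:ℝ), f (p.2.1 • p.1.1)
        ∂(μ.toSphere.prod (Measure.volumeIoiPow (Module.finrank ℝ E - 1))) := hpolar.symm
    _ = _ := by
      rw [lintegral_prod _ (by fun_prop)]
      refine lintegral_congr fun n => ?_
      rw [Measure.volumeIoiPow,
        lintegral_withDensity_eq_lintegral_mul _ (by fun_prop) (by fun_prop)]
      exact lintegral_subtype_comap measurableSet_Ioi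
        (fun r => ENNReal.ofReal (r ^ (Module.finrank ℝ E - 1)) * f (r • (n : E)))

section OpticalDepth

variable {E : Type*} [NormedAddCommGroup E] [NormedSpace ℝ E] (α : E → ℝ) (x : E)

/-- Written as `‖y‖ * ∫₀¹` rather than `∫₀^‖y‖` so that it is visibly continuous in `y`. -/
noncomputable def opticalDepth (y : E) : ℝ := ‖y‖ * ∫ s in (0:ℝ)..1, α (x - s • y)

theorem opticalDepth_eq_integral (y : E) :
    opticalDepth α x y = ∫ t in (0:ℝ)..‖y‖, α (x - (t / ‖y‖) • y) := by
  rcases eq_or_ne ‖y‖ 0 with hy | hy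
  · simp [opticalDepth, hy]
  · rw [integral_comp_div (fun s => α (x - s • y)) hy, zero_div, div_self hy, opticalDepth,
      smul_eq_mul]

theorem opticalDepth_smul {n : E} (hn : ‖n‖ = 1) {r : ℝ} (hr : 0 < r) :
    opticalDepth α x (r • n) = ∫ t in (0:ℝ)..r, α (x - t • n) := by
  have hnorm : ‖r • n‖ = r := by rw [norm_smul, hn, norm_of_nonneg hr.le, mul_one]
  rw [opticalDepth_eq_integral, hnorm]
  refine integral_congr fun t _ => ?_
  rw [smul_smul, div_mul_cancel₀ t hr.ne']

variable {α} in
theorem continuous_opticalDepth (hα : Continuous α) : Continuous (opticalDepth α x) :=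
  continuous_norm.mul <| continuous_parametric_intervalIntegral_of_continuous' (by fun_prop) 0 1

end OpticalDepth

local notation "ℝ³" => EuclideanSpace ℝ (Fin 3)

section TransportKernel

variable {α : ℝ³ → ℝ} {c ε : ℝ} (x : ℝ³)

variable (α ε) in
/-- The kernel `K_ε(x; η)` in the displacement variable `y = x - η`. -/
noncomputable def transportKernel (y : ℝ³) : ℝ :=
  α (x - y) * exp (-(1/ε) * opticalDepth α x y) / (4 * π * ε * ‖y‖ ^ 2)

theorem measurable_transportKernel (hα : Continuous α) :
    Measurable (transportKernel α ε x) := by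
  have := continuous_opticalDepth x hα
  unfold transportKernel
  fun_prop

theorem transportKernel_nonneg (hα : ∀ y, 0 ≤ α y) (hε : 0 ≤ ε) (y : ℝ³) :
    0 ≤ transportKernel α ε x y := by
  have := hα (x - y)
  unfold transportKernel
  positivity

theorem lintegral_Ioi_transportKernel_smul (hα : Continuous α) (hc : 0 < c)
    (hαc : ∀ y, c ≤ α y) (hε : 0 < ε) {n : ℝ³} (hn : ‖n‖ = 1) :
    ∫⁻ r in Ioi (0:ℝ), ENNReal.ofReal (r ^ 2) * ENNReal.ofReal (transportKernel α ε x (r • n))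
      = ENNReal.ofReal (1 / (4 * π)) := by
  obtain ⟨hint, hval⟩ := integral_Ioi_mul_exp_neg_integral (f := fun r => α (x - r • n))
    (by fun_prop) hc (fun r => hαc _) hε
  have hray : ∀ r ∈ Ioi (0:ℝ),
      ENNReal.ofReal (r ^ 2) * ENNReal.ofReal (transportKernel α ε x (r • n)) =
        ENNReal.ofReal
          (α (x - r • n) * exp (-(1/ε) * ∫ t in (0:ℝ)..r, α (x - t • n)) / (4 * π * ε)) := by
    intro r (hr : 0 < r)
    rw [← ENNReal.ofReal_mul (by positivity), transportKernel, opticalDepth_smul α x hn hr,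
      norm_smul, hn, norm_of_nonneg hr.le, mul_one]
    congr 1
    field_simp
  rw [setLIntegral_congr_fun measurableSet_Ioi hray,
    ← ofReal_integral_eq_lintegral_ofReal (hint.div_const _)]
  · rw [MeasureTheory.integral_div, hval]
    congr 1
    field_simp
  · exact .of_forall fun r =>
      div_nonneg (mul_nonneg (hc.le.trans (hαc _)) (exp_pos _).le) (by positivity)

theorem lintegral_transportKernel (hα : Continuous α) (hc : 0 < c) (hαc : ∀ y, c ≤ α y)
    (hε : 0 < ε) : ∫⁻ y, ENNReal.ofReal (transportKernel α ε x y) = 1 := by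
  rw [volume.lintegral_eq_lintegral_sphere_lintegral_Ioi
    (measurable_transportKernel x hα).ennreal_ofReal]
  simp only [finrank_euclideanSpace_fin]
  rw [lintegral_congr fun n =>
      lintegral_Ioi_transportKernel_smul x hα hc hαc hε (norm_eq_of_mem_sphere n),
    lintegral_const, Measure.toSphere_apply_univ, finrank_euclideanSpace_fin,
    EuclideanSpace.volume_ball_fin_three, ENNReal.ofReal_one, one_pow, one_mul,
    ← ENNReal.ofReal_natCast, ← ENNReal.ofReal_mul (by positivity),
    ← ENNReal.ofReal_mul (by positivity), ENNReal.ofReal_eq_one]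
  field_simp
  norm_num

end TransportKernel

theorem Keps_alpha_integral (α : EuclideanSpace ℝ (Fin 3) → ℝ) (hα : Continuous α)
    (c₀ c₁ : ℝ) (hc₀ : 0 < c₀) (hbound : ∀ x, c₀ ≤ α x ∧ α x ≤ c₁)
    (ε : ℝ) (hε : 0 < ε) (x : EuclideanSpace ℝ (Fin 3)) :
    (∫ η : EuclideanSpace ℝ (Fin 3),
      α η * Real.exp (-(1/ε) * ∫ t in (0:ℝ)..‖x - η‖, α (x - (t / ‖x - η‖) • (x - η))) /
        (4 * π * ε * ‖x - η‖^2)) = 1 := by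
  have hαc : ∀ y, c₀ ≤ α y := fun y => (hbound y).1
  have hK : ∀ η : ℝ³,
      α η * exp (-(1/ε) * ∫ t in (0:ℝ)..‖x - η‖, α (x - (t / ‖x - η‖) • (x - η))) /
        (4 * π * ε * ‖x - η‖^2) = transportKernel α ε x (x - η) := fun η => by
    rw [transportKernel, opticalDepth_eq_integral, sub_sub_cancel]
  simp_rw [hK]
  rw [integral_sub_left_eq_self (transportKernel α ε x),
    integral_eq_lintegral_of_nonneg_ae
      (.of_forall (transportKernel_nonneg x (fun y => hc₀.le.trans (hαc y)) hε.le))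
      (measurable_transportKernel x hα).aestronglyMeasurable,
    lintegral_transportKernel x hα hc₀ hαc hε, ENNReal.toReal_one]
end
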